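/- With cap_i := Id_{M(μ)} ⊗ Id^{⊗(i−1)} ⊗ coev ⊗ Id^{⊗(n−i−1)} : M(μ)⊗V₁^{⊗(n−2)} → M(μ)⊗V₁^{⊗n} (inserting w₀⊗w₁ − q⁻¹w₁⊗w₀ at tensor positions i, i+1), the extended Jones–Wenzl projector satisfies P_{μ,n} ∘ cap_i = 0 for all i = 1, …, n−1. -/

import Mathlib

open TensorProduct

noncomputable section

variable (F : Type) [Field F]

/-- Underlying space of a Verma module `M(μ)`: formal span of basis `v_i`, `i : ℕ`. -/
abbrev MM := ℕ →₀ F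

/-- Underlying space of the 2-dimensional irreducible module `V₁`: basis `w₀, w₁`. -/
abbrev V := Fin 2 →₀ F

/-- Basis vector `v_i` of a Verma module. -/
def vv (i : ℕ) : MM F := Finsupp.single i 1

/-- Basis vector `w_j` of `V₁`. -/
def ww (j : Fin 2) : V F := Finsupp.single j 1

/-- Linear map out of a Verma module defined on the basis. -/
def mkM {W : Type} [AddCommGroup W] [Module F W] (f : ℕ → W) : MM F →ₗ[F] W :=
  Finsupp.lift W F ℕ f

/-- Linear map out of `V₁` defined on the basis. -/
def mkV {W : Type} [AddCommGroup W] [Module F W] (f : Fin 2 → W) : V F →ₗ[F] W :=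
  Finsupp.lift W F (Fin 2) f

/-- Quantum bracket: if `x = q^k` then `qb q x = [k] = (q^k - q^(-k))/(q - q⁻¹)`. -/
def qb {G : Type} [Field G] (q x : G) : G := (x - x⁻¹) / (q - q⁻¹)

variable (q qm : F)

/- Actions on the Verma module `M(μ)`, where `qm` plays the role of `q^μ`. -/

/-- `K · v_i = q^(μ-2i) v_i`. -/
def KM : MM F →ₗ[F] MM F := mkM F fun i => (qm * (q⁻¹) ^ (2 * i)) • vv F i

/-- `K⁻¹ · v_i = q^(-μ+2i) v_i`. -/
def KMinv : MM F →ₗ[F] MM F := mkM F fun i => (qm⁻¹ * q ^ (2 * i)) • vv F i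

/-- `E · v_i = [i] v_(i-1)`. -/
def EM : MM F →ₗ[F] MM F := mkM F fun i => qb q (q ^ i) • vv F (i - 1)

/-- `F · v_i = [μ-i] v_(i+1)`. -/
def FM : MM F →ₗ[F] MM F := mkM F fun i => qb q (qm * (q⁻¹) ^ i) • vv F (i + 1)

/- Actions on `V₁`. -/

/-- `K · w_j = q^(1-2j) w_j`. -/
def KV : V F →ₗ[F] V F := mkV F fun j => (if j = 0 then q else q⁻¹) • ww F j

/-- `K⁻¹ · w_j = q^(2j-1) w_j`. -/
def KVinv : V F →ₗ[F] V F := mkV F fun j => (if j = 0 then q⁻¹ else q) • ww F j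

/-- `E · w₀ = 0`, `E · w₁ = w₀`. -/
def EV : V F →ₗ[F] V F := mkV F fun j => if j = 0 then 0 else ww F 0

/-- `F · w₀ = w₁`, `F · w₁ = 0`. -/
def FV : V F →ₗ[F] V F := mkV F fun j => if j = 0 then ww F 1 else 0

/- Coproduct actions on `M(μ) ⊗ V₁`:
`Δ(K) = K ⊗ K`, `Δ(E) = E ⊗ K + 1 ⊗ E`, `Δ(F) = F ⊗ 1 + K⁻¹ ⊗ F`. -/

def KT : MM F ⊗[F] V F →ₗ[F] MM F ⊗[F] V F := TensorProduct.map (KM F q qm) (KV F q)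

def KTinv : MM F ⊗[F] V F →ₗ[F] MM F ⊗[F] V F :=
  TensorProduct.map (KMinv F q qm) (KVinv F q)

def ET : MM F ⊗[F] V F →ₗ[F] MM F ⊗[F] V F :=
  TensorProduct.map (EM F q) (KV F q) + TensorProduct.map LinearMap.id (EV F)

def FT : MM F ⊗[F] V F →ₗ[F] MM F ⊗[F] V F :=
  TensorProduct.map (FM F q qm) LinearMap.id + TensorProduct.map (KMinv F q qm) (FV F)

/- Coproduct actions on `V₁ ⊗ V₁`. -/

def KVV : V F ⊗[F] V F →ₗ[F] V F ⊗[F] V F := TensorProduct.map (KV F q) (KV F q)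

def EVV : V F ⊗[F] V F →ₗ[F] V F ⊗[F] V F :=
  TensorProduct.map (EV F) (KV F q) + TensorProduct.map LinearMap.id (EV F)

def FVV : V F ⊗[F] V F →ₗ[F] V F ⊗[F] V F :=
  TensorProduct.map (FV F) LinearMap.id + TensorProduct.map (KVinv F q) (FV F)

/-- `E_μ : M(μ) ⊗ V₁ → M(μ+1)`, `E_μ(v_i ⊗ w₀) = q^i v_i`, `E_μ(v_i ⊗ w₁) = v_(i+1)`. -/
def Emap : MM F ⊗[F] V F →ₗ[F] MM F :=
  TensorProduct.lift (mkM F fun i => mkV F fun j =>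
    if j = 0 then q ^ i • vv F i else vv F (i + 1))

/-- `F_μ : M(μ+1) → M(μ) ⊗ V₁`,
`F_μ(v_i) = [μ+1-i] v_i ⊗ w₀ + q^(i-μ-1) [i] v_(i-1) ⊗ w₁`. -/
def Fmap : MM F →ₗ[F] MM F ⊗[F] V F :=
  mkM F fun i =>
    qb q (qm * q * (q⁻¹) ^ i) • (vv F i ⊗ₜ[F] ww F 0) +
    (q ^ i * qm⁻¹ * q⁻¹ * qb q (q ^ i)) • (vv F (i - 1) ⊗ₜ[F] ww F 1)

/-- Evaluation (denoted `cup` in the paper): `ev(w₀⊗w₁) = -q`, `ev(w₁⊗w₀) = 1`,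
`ev(w₀⊗w₀) = ev(w₁⊗w₁) = 0`. -/
def ev : V F ⊗[F] V F →ₗ[F] F :=
  TensorProduct.lift (mkV F fun j => mkV F fun j' =>
    if j = 0 ∧ j' = 1 then -q else if j = 1 ∧ j' = 0 then 1 else 0)

/-- Coevaluation (denoted `cap` in the paper): `1 ↦ w₀⊗w₁ - q⁻¹ w₁⊗w₀`. -/
def coev : F →ₗ[F] V F ⊗[F] V F :=
  LinearMap.toSpanSingleton F _ (ww F 0 ⊗ₜ[F] ww F 1 - q⁻¹ • (ww F 1 ⊗ₜ[F] ww F 0))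

/-- `Id_X ⊗ ev : (X ⊗ V₁) ⊗ V₁ → X`. -/
def ev2 (X : Type) [AddCommGroup X] [Module F X] : (X ⊗[F] V F) ⊗[F] V F →ₗ[F] X :=
  (TensorProduct.rid F X).toLinearMap ∘ₗ LinearMap.lTensor X (ev F q) ∘ₗ
    (TensorProduct.assoc F X (V F) (V F)).toLinearMap

/-- `Id_X ⊗ coev : X → (X ⊗ V₁) ⊗ V₁`. -/
def coev2 (X : Type) [AddCommGroup X] [Module F X] : X →ₗ[F] (X ⊗[F] V F) ⊗[F] V F :=
  (TensorProduct.assoc F X (V F) (V F)).symm.toLinearMap ∘ₗ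
    LinearMap.lTensor X (coev F q) ∘ₗ (TensorProduct.rid F X).symm.toLinearMap

/-- `A F n` is (the underlying space of) `M(μ) ⊗ V₁^{⊗ n}`, left associated. -/
def A : ℕ → ModuleCat F
  | 0 => ModuleCat.of F (MM F)
  | n + 1 => ModuleCat.of F ((A n) ⊗[F] V F)

/-- Extend `f : M(μ') ⊗ V₁ → M(μ'+1)`-type maps by identities on the right:
`ext f k = f ⊗ Id^{⊗ k} : M ⊗ V₁^{⊗(k+1)} → M' ⊗ V₁^{⊗ k}`. -/
def ext (f : A F 1 →ₗ[F] A F 0) : ∀ k, A F (k + 1) →ₗ[F] A F k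
  | 0 => f
  | k + 1 => LinearMap.rTensor (V F) (ext f k)

/-- Extend `g : M(μ'+1) → M(μ') ⊗ V₁`-type maps by identities on the right. -/
def ext' (g : A F 0 →ₗ[F] A F 1) : ∀ k, A F k →ₗ[F] A F (k + 1)
  | 0 => g
  | k + 1 => LinearMap.rTensor (V F) (ext' g k)

/-- Extend a map `A (a+2) → A a` (e.g. `Id ⊗ ev` at the last two positions of `A (a+2)`)
by `k` identities on the right. -/
def cext {a : ℕ} (f : A F (a + 2) →ₗ[F] A F a) : ∀ k, A F (a + 2 + k) →ₗ[F] A F (a + k)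
  | 0 => f
  | k + 1 => LinearMap.rTensor (V F) (cext f k)

/-- Extend a map `A a → A (a+2)` (e.g. `Id ⊗ coev`) by `k` identities on the right. -/
def cext' {a : ℕ} (g : A F a →ₗ[F] A F (a + 2)) : ∀ k, A F (a + k) →ₗ[F] A F (a + 2 + k)
  | 0 => g
  | k + 1 => LinearMap.rTensor (V F) (cext' g k)

/-- The composite `E_{μ+n-1} ∘ E_{μ+n-2,1} ∘ ⋯ ∘ E_{μ,n-1} : M(μ) ⊗ V₁^{⊗n} → M(μ+n)`. -/
def Echain (q : F) : F → ∀ n, A F n →ₗ[F] A F 0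
  | _, 0 => LinearMap.id
  | qm, n + 1 => (Echain q (q * qm) n).comp (ext F (Emap F q) n)

/-- The composite `F_{μ,n-1} ∘ F_{μ+1,n-2} ∘ ⋯ ∘ F_{μ+n-1} : M(μ+n) → M(μ) ⊗ V₁^{⊗n}`. -/
def Fchain (q : F) : F → ∀ n, A F 0 →ₗ[F] A F n
  | _, 0 => LinearMap.id
  | qm, n + 1 => (ext' F (Fmap F q qm) n).comp (Fchain q (q * qm) n)

/-- The scalar `[μ+n][μ+n-1]⋯[μ+1]`. -/
def cf {G : Type} [Field G] (q : G) : G → ℕ → G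
  | _, 0 => 1
  | qm, n + 1 => qb q (q * qm) * cf q (q * qm) n

/-- The extended Jones–Wenzl projector
`P_{μ,n} = F_{μ,n-1}⋯F_{μ+n-1} E_{μ+n-1}⋯E_{μ,n-1} / ([μ+n]⋯[μ+1])`. -/
def P (n : ℕ) : A F n →ₗ[F] A F n :=
  (cf q qm n)⁻¹ • ((Fchain F q qm n).comp (Echain F q qm n))

/-!
`P_{μ,n}` ends with the chain `E_{μ+n-1} ∘ ⋯ ∘ E_{μ,n-1}`, so it suffices that this chain kills
`cap_i`. Since `Id ⊗ coev` is natural, the first `i - 1` maps `E` slide past it; the next two meet it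
in `E_{μ'+1} ∘ (E_{μ'} ⊗ Id) ∘ (Id ⊗ coev)`, which sends `v_j` to
`q^j v_{j+1} - q⁻¹ q^{j+1} v_{j+1} = 0`; the remaining factors only carry this zero along.
-/

lemma mkM_vv {W : Type} [AddCommGroup W] [Module F W] (f : ℕ → W) (i : ℕ) :
    mkM F f (vv F i) = f i := by
  simp [mkM, vv]

lemma mkV_ww {W : Type} [AddCommGroup W] [Module F W] (f : Fin 2 → W) (j : Fin 2) :
    mkV F f (ww F j) = f j := by
  simp [mkV, ww]

lemma Emap_vv_tmul_ww_zero (i : ℕ) : Emap F q (vv F i ⊗ₜ ww F 0) = q ^ i • vv F i := by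
  simp [Emap, mkM_vv, mkV_ww]

lemma Emap_vv_tmul_ww_one (i : ℕ) : Emap F q (vv F i ⊗ₜ ww F 1) = vv F (i + 1) := by
  simp [Emap, mkM_vv, mkV_ww]

lemma coev2_apply {X : Type} [AddCommGroup X] [Module F X] (x : X) :
    coev2 F q X x = (x ⊗ₜ ww F 0) ⊗ₜ ww F 1 - q⁻¹ • ((x ⊗ₜ ww F 1) ⊗ₜ ww F 0) := by
  -- `tmul_sub` does not fire on the subtraction as elaborated in `coev`; `module` rewrites it
  have h : ww F 0 ⊗ₜ[F] ww F 1 - q⁻¹ • (ww F 1 ⊗ₜ[F] ww F 0)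
      = ww F 0 ⊗ₜ[F] ww F 1 + (-q⁻¹) • (ww F 1 ⊗ₜ[F] ww F 0) := by module
  simp only [coev2, coev, LinearMap.comp_apply, LinearEquiv.coe_coe, TensorProduct.rid_symm_apply,
    LinearMap.lTensor_tmul, LinearMap.toSpanSingleton_apply, one_smul, h,
    TensorProduct.tmul_add, TensorProduct.tmul_smul, map_add, map_smul,
    TensorProduct.assoc_symm_tmul]
  module

lemma rTensor_rTensor_coev2 {X Y : Type} [AddCommGroup X] [Module F X]
    [AddCommGroup Y] [Module F Y] (f : X →ₗ[F] Y) (x : X) :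
    (f.rTensor (V F)).rTensor (V F) (coev2 F q X x) = coev2 F q Y (f x) := by
  simp only [coev2_apply, map_sub, map_smul, LinearMap.rTensor_tmul]

lemma Emap_rTensor_Emap_coev2_eq_zero (hq : q ≠ 0) (x : MM F) :
    Emap F q ((Emap F q).rTensor (V F) (coev2 F q (MM F) x)) = 0 := by
  induction x using Finsupp.induction_linear with
  | zero => simp only [map_zero]
  | add x y hx hy => simp only [map_add, hx, hy, add_zero]
  | single i c =>
    have hv : Finsupp.single i c = c • vv F i := by simp [vv]
    simp only [hv, map_smul, coev2_apply, map_sub, LinearMap.rTensor_tmul,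
      Emap_vv_tmul_ww_zero, Emap_vv_tmul_ww_one, ← TensorProduct.smul_tmul', smul_smul]
    rw [pow_succ', ← mul_assoc, inv_mul_cancel₀ hq, one_mul, sub_self, smul_zero]

-- `Echain` is defined by splitting off its first map `E_{μ,n-1}`; this splits off the last one.
lemma Echain_succ (qm : F) (n : ℕ) :
    Echain F q qm (n + 1) = Emap F q ∘ₗ (Echain F q qm n).rTensor (V F) := by
  induction n generalizing qm with
  | zero => exact congrArg (Emap F q ∘ₗ ·) (LinearMap.rTensor_id _ _).symm
  | succ n ih =>
    show Echain F q (q * qm) (n + 1) ∘ₗ (_root_.ext F (Emap F q) n).rTensor (V F) = _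
    rw [ih]
    exact TensorProduct.ext' fun _ _ => rfl

lemma Echain_comp_coev2_eq_zero (hq : q ≠ 0) (qm : F) (m : ℕ) :
    Echain F q qm (m + 2) ∘ₗ coev2 F q (A F m) = 0 := by
  refine LinearMap.ext fun x => ?_
  show Echain F q qm (m + 2) (coev2 F q (A F m) x) = 0
  rw [Echain_succ, Echain_succ]
  show Emap F q ((Emap F q).rTensor (V F)
    (((Echain F q qm m).rTensor (V F)).rTensor (V F) (coev2 F q (A F m) x))) = 0
  rw [rTensor_rTensor_coev2]
  exact Emap_rTensor_Emap_coev2_eq_zero F q hq _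

lemma Echain_comp_cext'_eq_zero (qm : F) {a : ℕ} (g : A F a →ₗ[F] A F (a + 2))
    (hg : Echain F q qm (a + 2) ∘ₗ g = 0) (k : ℕ) :
    Echain F q qm (a + 2 + k) ∘ₗ cext' F g k = 0 := by
  induction k with
  | zero => exact hg
  | succ k ih =>
    show Echain F q qm (a + 2 + k + 1) ∘ₗ (cext' F g k).rTensor (V F) = 0
    rw [Echain_succ]
    refine TensorProduct.ext' fun x y => ?_
    show Emap F q ((Echain F q qm (a + 2 + k) ∘ₗ cext' F g k) x ⊗ₜ y) = 0
    rw [ih]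
    show Emap F q ((0 : MM F) ⊗ₜ y) = 0
    rw [TensorProduct.zero_tmul, map_zero]

theorem stmt19 (m k : ℕ) (hq : q ≠ 0) :
    (P F q qm (m + 2 + k)).comp (cext' F (coev2 F q (A F m)) k) = 0 := by
  rw [P, LinearMap.smul_comp, LinearMap.comp_assoc,
    Echain_comp_cext'_eq_zero F q qm _ (Echain_comp_coev2_eq_zero F q hq qm m),
    LinearMap.comp_zero, smul_zero]

end
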